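/- For a difference cycle (a : b : c) with a+b+c = n and a,b,c positive, the orbit of the triangle {0, a, a+b} under the Z_n-action v ↦ v+1 has cardinality n if a, b, c are not all equal, and cardinality n/3 if a = b = c (which requires 3 | n). -/

import Mathlib

/-!
The orbit of the triangle `T = {0, a, a + b}` under translation has size the index of its
stabiliser `H`. As `0 ∈ T`, every element of `H` lies in `T`, and comparing `T` with its
translates by `a` and by `a + b` shows that `H` is trivial unless `a ≡ b ≡ c`. When
`a = b = c`, `T` is the subgroup of order `3` generated by `a`, which is its own stabiliser.
-/

open Pointwise

section Translates
variable {G α : Type*} [AddGroup G] [Fintype G] [AddAction G α] [DecidableEq α]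

theorem card_image_vadd_eq_index_stabilizer (s : α) :
    (Finset.univ.image (· +ᵥ s : G → α)).card = (AddAction.stabilizer G s).index := by
  rw [AddAction.index_stabilizer, ← Set.ncard_coe_finset, Finset.coe_image, Finset.coe_univ,
    Set.image_univ]
  rfl

end Translates

section Triangle
variable {G : Type*} [AddCommGroup G] [DecidableEq G]

theorem mem_of_mem_stabilizer_of_zero_mem {s : Finset G} (h0 : 0 ∈ s) {g : G}
    (hg : g ∈ AddAction.stabilizer G s) : g ∈ s := by
  rw [AddAction.mem_stabilizer_iff] at hg
  exact hg ▸ Finset.mem_vadd_finset.mpr ⟨0, h0, add_zero g⟩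

theorem vadd_triangle (g x y : G) :
    g +ᵥ ({0, x, x + y} : Finset G) = {g, g + x, g + x + y} := by
  simp [Finset.vadd_finset_insert, add_assoc]

theorem stabilizer_triangle_eq_bot {x y z : G} (hx : x ≠ 0) (hy : y ≠ 0) (hz : z ≠ 0)
    (hsum : x + y + z = 0) (hne : ¬ (x = y ∧ y = z)) :
    AddAction.stabilizer G ({0, x, x + y} : Finset G) = ⊥ := by
  refine (AddSubgroup.eq_bot_iff_forall _).mpr fun g hg => ?_
  have hS := AddAction.mem_stabilizer_iff.mp hg
  rw [vadd_triangle] at hS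
  have h0 : (0 : G) ∈ ({g, g + x, g + x + y} : Finset G) := hS ▸ by simp
  have hx' : x ∈ ({g, g + x, g + x + y} : Finset G) := hS ▸ by simp
  have hxy : x + y ∈ ({g, g + x, g + x + y} : Finset G) := hS ▸ by simp
  have hg' := mem_of_mem_stabilizer_of_zero_mem (by simp) hg
  simp only [Finset.mem_insert, Finset.mem_singleton] at h0 hx' hxy hg'
  grind

theorem stabilizer_triangle_eq_zmultiples {x : G} (h3 : 3 • x = 0) :
    AddAction.stabilizer G ({0, x, x + x} : Finset G) = AddSubgroup.zmultiples x := by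
  apply le_antisymm
  · intro g hg
    have := mem_of_mem_stabilizer_of_zero_mem (by simp) hg
    simp only [Finset.mem_insert, Finset.mem_singleton] at this
    have hx := AddSubgroup.mem_zmultiples x
    rcases this with rfl | rfl | rfl
    exacts [zero_mem _, hx, add_mem hx hx]
  · rw [AddSubgroup.zmultiples_le, AddAction.mem_stabilizer_iff, vadd_triangle]
    have h3' : x + x + x = 0 := by rw [← h3]; abel
    rw [h3']
    ext; simp only [Finset.mem_insert, Finset.mem_singleton]; tauto

end Triangle

theorem ZMod.natCast_ne_zero_of_pos_of_lt {n a : ℕ} (ha : 0 < a) (han : a < n) :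
    (a : ZMod n) ≠ 0 := by
  rw [Ne, ZMod.natCast_eq_zero_iff]
  exact Nat.not_dvd_of_pos_of_lt ha han

theorem ZMod.natCast_eq_natCast_of_lt {n a b : ℕ} (han : a < n) (hbn : b < n)
    (h : (a : ZMod n) = b) : a = b := by
  rwa [ZMod.natCast_eq_natCast_iff', Nat.mod_eq_of_lt han, Nat.mod_eq_of_lt hbn] at h

/-- For a difference cycle `(a : b : c)` with `a + b + c = n`, the orbit of the triangle
`{0, a, a+b}` under `v ↦ v + 1` on `ZMod n` has cardinality `n` if `a, b, c` are not all
equal, and cardinality `n / 3` if `a = b = c`. -/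
theorem diffCycle_orbit_card (n a b c : ℕ) [NeZero n]
    (ha : 0 < a) (hb : 0 < b) (hc : 0 < c) (habc : a + b + c = n) :
    (¬ (a = b ∧ b = c) →
      (Finset.univ.image
        (fun i : ZMod n => ({i, i + (a : ZMod n), i + (a : ZMod n) + (b : ZMod n)} :
          Finset (ZMod n)))).card = n) ∧
    ((a = b ∧ b = c) →
      (Finset.univ.image
        (fun i : ZMod n => ({i, i + (a : ZMod n), i + (a : ZMod n) + (b : ZMod n)} :
          Finset (ZMod n)))).card = n / 3) := by
  simp only [← vadd_triangle, card_image_vadd_eq_index_stabilizer]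
  have hsum : (a : ZMod n) + b + c = 0 := by
    rw [← Nat.cast_add, ← Nat.cast_add, habc, ZMod.natCast_self]
  constructor
  · intro hne
    have cast_ne_zero {k : ℕ} : 0 < k → k < n → (k : ZMod n) ≠ 0 :=
      ZMod.natCast_ne_zero_of_pos_of_lt
    have cast_inj {k l : ℕ} : k < n → l < n → (k : ZMod n) = l → k = l :=
      ZMod.natCast_eq_natCast_of_lt
    rw [stabilizer_triangle_eq_bot (cast_ne_zero ha (by omega)) (cast_ne_zero hb (by omega))
      (cast_ne_zero hc (by omega)) hsum, AddSubgroup.index_bot, Nat.card_zmod]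
    rintro ⟨hab, hbc⟩
    exact hne ⟨cast_inj (by omega) (by omega) hab, cast_inj (by omega) (by omega) hbc⟩
  · rintro ⟨rfl, rfl⟩
    have h3 : 3 • (a : ZMod n) = 0 := by rw [← hsum]; abel
    have horder : addOrderOf (a : ZMod n) = 3 :=
      addOrderOf_eq_prime h3 (ZMod.natCast_ne_zero_of_pos_of_lt ha (by omega))
    have hindex := (AddSubgroup.zmultiples (a : ZMod n)).index_mul_card
    rw [Nat.card_zmultiples, horder, Nat.card_zmod] at hindex
    rw [stabilizer_triangle_eq_zmultiples h3]
    omega
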